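/- arXiv:1109.0712 — 3 statements merged into one kernel-verified Lean document; each statement's English description precedes it below -/
import Mathlib

section
/- Let m be real-analytic on an open interval J, n continuous and nonvanishing on J, and suppose m'(x) ≠ 0 whenever m(x) ∈ [τ₀, τ₁] (for fixed τ₀ ≤ τ₁), and that sign(m'(x)) = sign(n(x)) at every x ∈ J with m(x) ∈ {τ₀, τ₁} and m' nonvanishing there. Then the set K := m⁻¹([τ₀, τ₁]) ∩ J is connected (an interval). -/
/-!
Being continuous and nonvanishing on the interval, `n` has constant sign there, so by the sign
condition `m` crosses each of the levels `τ₀`, `τ₁` with derivative of one fixed sign. A continuous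
function whose derivative is positive wherever it equals `τ` cannot drop below `τ` again once it has
reached it (continuous induction), and symmetrically for a negative derivative. Hence `{m ≥ τ₀}` and
`{m ≤ τ₁}` are each an initial or a final segment of `J`, and `K` is their intersection.
-/

open Set Filter Topology

section

variable {f : ℝ → ℝ} {I : Set ℝ} {x y τ : ℝ}

theorem eventually_nhdsGT_lt_of_deriv_pos (hd : 0 < deriv f x) : ∀ᶠ t in 𝓝[>] x, f x < f t := by
  have hslope := hasDerivAt_iff_tendsto_slope.mp
    (differentiableAt_of_deriv_ne_zero hd.ne').hasDerivAt
  filter_upwards [(hslope.mono_left (nhdsGT_le_nhdsNE x)).eventually (eventually_gt_nhds hd),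
    self_mem_nhdsWithin] with t hpos hxt
  exact (slope_pos_iff_of_le (le_of_lt hxt)).mp hpos

theorem ContinuousOn.Icc_subset_preimage_Ici_of_deriv_pos (hf : ContinuousOn f (Icc x y))
    (hx : τ ≤ f x) (hd : ∀ t ∈ Ico x y, f t = τ → 0 < deriv f t) :
    Icc x y ⊆ f ⁻¹' Ici τ := by
  have hclosed : IsClosed (f ⁻¹' Ici τ ∩ Icc x y) := by
    rw [inter_comm]; exact hf.preimage_isClosed_of_isClosed isClosed_Icc isClosed_Ici
  refine hclosed.Icc_subset_of_forall_mem_nhdsWithin hx fun t ⟨(ht : τ ≤ f t), htI⟩ ↦ ?_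
  rcases ht.eq_or_lt with heq | hlt
  · filter_upwards [eventually_nhdsGT_lt_of_deriv_pos (hd t htI heq.symm)] with s hs
    exact heq.trans_lt hs |>.le
  · have hcont : ContinuousWithinAt f (Ioi t) t :=
      (hf t (Ico_subset_Icc_self htI)).mono_of_mem_nhdsWithin (Icc_mem_nhdsGT_of_mem htI)
    filter_upwards [hcont.eventually (lt_mem_nhds hlt)] with s hs using hs.le

theorem ContinuousOn.Icc_subset_preimage_Ici_of_deriv_neg (hf : ContinuousOn f (Icc x y))
    (hy : τ ≤ f y) (hd : ∀ t ∈ Ioc x y, f t = τ → deriv f t < 0) :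
    Icc x y ⊆ f ⁻¹' Ici τ := by
  have hrefl : Icc (-y) (-x) ⊆ (fun s ↦ f (-s)) ⁻¹' Ici τ := by
    refine ContinuousOn.Icc_subset_preimage_Ici_of_deriv_pos ?_ (by simpa using hy) ?_
    · exact hf.comp continuous_neg.continuousOn fun s hs ↦ ⟨by linarith [hs.2], by linarith [hs.1]⟩
    · intro t ht hft
      rw [deriv_comp_neg, neg_pos]
      exact hd (-t) ⟨by linarith [ht.2], by linarith [ht.1]⟩ hft
  intro t ht
  simpa using hrefl (show -t ∈ Icc (-y) (-x) from ⟨by linarith [ht.2], by linarith [ht.1]⟩)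

theorem Set.OrdConnected.inter_preimage_Ici_of_deriv (hI : I.OrdConnected) (hf : ContinuousOn f I)
    (hd : (∀ t ∈ I, f t = τ → 0 < deriv f t) ∨ (∀ t ∈ I, f t = τ → deriv f t < 0)) :
    (I ∩ f ⁻¹' Ici τ).OrdConnected := by
  refine ⟨fun x hx y hy ↦ subset_inter (hI.out hx.1 hy.1) ?_⟩
  have hsub := hI.out hx.1 hy.1
  rcases hd with hpos | hneg
  · exact (hf.mono hsub).Icc_subset_preimage_Ici_of_deriv_pos hx.2
      fun t ht ↦ hpos t (hsub (Ico_subset_Icc_self ht))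
  · exact (hf.mono hsub).Icc_subset_preimage_Ici_of_deriv_neg hy.2
      fun t ht ↦ hneg t (hsub (Ioc_subset_Icc_self ht))

theorem Set.OrdConnected.inter_preimage_Iic_of_deriv (hI : I.OrdConnected) (hf : ContinuousOn f I)
    (hd : (∀ t ∈ I, f t = τ → 0 < deriv f t) ∨ (∀ t ∈ I, f t = τ → deriv f t < 0)) :
    (I ∩ f ⁻¹' Iic τ).OrdConnected := by
  have hneg := hI.inter_preimage_Ici_of_deriv (f := -f) (τ := -τ) hf.neg <| by
    simp only [Pi.neg_apply, neg_inj, deriv.neg, neg_pos, neg_lt_zero]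
    exact hd.symm
  convert hneg using 2
  ext t; simp

theorem IsPreconnected.forall_pos_or_forall_neg {g : ℝ → ℝ} (hI : IsPreconnected I)
    (hg : ContinuousOn g I) (hg0 : ∀ x ∈ I, g x ≠ 0) :
    (∀ x ∈ I, 0 < g x) ∨ (∀ x ∈ I, g x < 0) := by
  by_contra! ⟨⟨x, hx, hgx⟩, ⟨y, hy, hgy⟩⟩
  obtain ⟨z, hz, hgz⟩ := hI.intermediate_value hx hy hg ⟨hgx, hgy⟩
  exact hg0 z hz hgz

theorem IsPreconnected.forall_deriv_pos_or_forall_deriv_neg {g : ℝ → ℝ} (hI : IsPreconnected I)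
    (hg : ContinuousOn g I) (hg0 : ∀ x ∈ I, g x ≠ 0)
    (hd : ∀ t ∈ I, f t = τ → deriv f t ≠ 0 ∧ (0 < deriv f t ↔ 0 < g t)) :
    (∀ t ∈ I, f t = τ → 0 < deriv f t) ∨ (∀ t ∈ I, f t = τ → deriv f t < 0) := by
  refine (hI.forall_pos_or_forall_neg hg hg0).imp
    (fun hpos t ht hft ↦ (hd t ht hft).2.mpr (hpos t ht)) fun hneg t ht hft ↦ ?_
  obtain ⟨hne, hiff⟩ := hd t ht hft
  exact hne.lt_of_le (not_lt.mp fun h ↦ (hneg t ht).not_gt (hiff.mp h))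

end

/-- connectedness of `K = m⁻¹([τ₀,τ₁]) ∩ J` (Lemma 4 of the paper). -/
theorem stmt7 (a b τ₀ τ₁ : ℝ) (hτ : τ₀ ≤ τ₁)
    (m n : ℝ → ℝ)
    (hm : AnalyticOnNhd ℝ m (Ioo a b))
    (hncont : ContinuousOn n (Ioo a b))
    (hnne : ∀ x ∈ Ioo a b, n x ≠ 0)
    (hderiv : ∀ x ∈ Ioo a b, m x ∈ Icc τ₀ τ₁ → deriv m x ≠ 0)
    (hsign : ∀ x ∈ Ioo a b, (m x = τ₀ ∨ m x = τ₁) → deriv m x ≠ 0 →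
      (0 < deriv m x ↔ 0 < n x)) :
    IsPreconnected (m ⁻¹' Icc τ₀ τ₁ ∩ Ioo a b) := by
  have hcross : ∀ τ, (τ = τ₀ ∨ τ = τ₁) → (∀ t ∈ Ioo a b, m t = τ → 0 < deriv m t) ∨
      (∀ t ∈ Ioo a b, m t = τ → deriv m t < 0) := by
    rintro τ hτ'
    refine isPreconnected_Ioo.forall_deriv_pos_or_forall_deriv_neg hncont hnne ?_
    rintro t ht rfl
    have hne := hderiv t ht (by rcases hτ' with h | h <;> simp [h, hτ])
    exact ⟨hne, hsign t ht (by rcases hτ' with h | h <;> simp [h]) hne⟩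
  have hK : m ⁻¹' Icc τ₀ τ₁ ∩ Ioo a b =
      (Ioo a b ∩ m ⁻¹' Ici τ₀) ∩ (Ioo a b ∩ m ⁻¹' Iic τ₁) := by
    ext t; simp only [mem_inter_iff, mem_preimage, mem_Icc, mem_Ici, mem_Iic]; tauto
  rw [hK]
  refine OrdConnected.isPreconnected (.inter ?_ ?_)
  · exact ordConnected_Ioo.inter_preimage_Ici_of_deriv hm.continuousOn (hcross τ₀ (.inl rfl))
  · exact ordConnected_Ioo.inter_preimage_Iic_of_deriv hm.continuousOn (hcross τ₁ (.inr rfl))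
end

section
/- Let k_I(λ, ε) := (1/(2πi)) ∫_a^b [n(x+iε)/(λ - m(x+iε)) - n(x-iε)/(λ - m(x-iε))] dx, where m, n are holomorphic near [a,b] ⊂ ℝ, real on [a,b], m' nonvanishing on [a,b], n nonvanishing. Then there exist ε₀ > 0 and a constant C such that |k_I(λ,ε)| ≤ C for all λ in a fixed compact set S ⊂ ℝ and all 0 < ε < ε₀. -/
/-!
Since `m` is real on `[a, b]` with `|m'| ≥ k`, its restriction to `[a, b]` is monotone with slope at
least `k` in absolute value, so for every `λ` there is `x₀ ∈ [a, b]` with `k |x - x₀| ≤ |λ - m x|`.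
A first-order Taylor expansion, uniform on `[a, b]`, gives `‖λ - m (x ± iε)‖ ≥ k (|x - x₀| + ε) / 4`
for small `ε`, while the numerator of the difference of the two fractions is `O(ε)` by Lipschitz
bounds on a compact neighbourhood of `[a, b]`. Hence the integrand is bounded by a multiple of the
Poisson kernel `ε / ((x - x₀)² + ε²)`, whose integral is at most `π`.
-/

open Complex Set Real Metric

theorem integral_div_sub_sq_add_sq_le_pi (a b x₀ ε : ℝ) :
    ∫ x in a..b, ε / ((x - x₀) ^ 2 + ε ^ 2) ≤ π := by
  have h : ∫ x in a..b, ε / ((x - x₀) ^ 2 + ε ^ 2)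
      = Real.arctan ((b - x₀) / ε) - Real.arctan ((a - x₀) / ε) := by
    simp_rw [add_comm _ (ε ^ 2)]
    rw [intervalIntegral.integral_comp_sub_right (fun x => ε / (ε ^ 2 + x ^ 2)),
      integral_div_sq_add_sq]
  rw [h]
  linarith [arctan_lt_pi_div_two ((b - x₀) / ε), neg_pi_div_two_lt_arctan ((a - x₀) / ε)]

theorem norm_integral_le_mul_pi_of_norm_le {f : ℝ → ℂ} {a b x₀ ε C : ℝ} (hab : a ≤ b)
    (hε : 0 < ε) (hC : 0 ≤ C) (hf : ∀ x ∈ Icc a b, ‖f x‖ ≤ C * (ε / ((x - x₀) ^ 2 + ε ^ 2))) :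
    ‖∫ x in a..b, f x‖ ≤ C * π := by
  have hint : IntervalIntegrable (fun x => C * (ε / ((x - x₀) ^ 2 + ε ^ 2)))
      MeasureTheory.volume a b :=
    Continuous.intervalIntegrable
      (continuous_const.mul (continuous_const.div (by fun_prop) fun x => by positivity)) _ _
  calc ‖∫ x in a..b, f x‖ ≤ ∫ x in a..b, C * (ε / ((x - x₀) ^ 2 + ε ^ 2)) :=
        intervalIntegral.norm_integral_le_of_norm_le hab
          (Filter.Eventually.of_forall fun x hx => hf x (Ioc_subset_Icc_self hx)) hint
    _ = C * ∫ x in a..b, ε / ((x - x₀) ^ 2 + ε ^ 2) := intervalIntegral.integral_const_mul _ _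
    _ ≤ C * π := by gcongr; exact integral_div_sub_sq_add_sq_le_pi a b x₀ ε

theorem exists_mul_abs_sub_le_abs_sub_of_mul_sub_le {f : ℝ → ℝ} {a b k : ℝ} (hab : a ≤ b)
    (hk : 0 ≤ k) (hf : ContinuousOn f (Icc a b))
    (hmono : ∀ x ∈ Icc a b, ∀ y ∈ Icc a b, x ≤ y → k * (y - x) ≤ f y - f x) (c : ℝ) :
    ∃ x₀ ∈ Icc a b, ∀ x ∈ Icc a b, k * |x - x₀| ≤ |c - f x| := by
  have hsep : ∀ x ∈ Icc a b, ∀ y ∈ Icc a b, k * |y - x| ≤ |f y - f x| := by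
    intro x hx y hy
    rcases le_total x y with hxy | hyx
    · rw [abs_of_nonneg (sub_nonneg.2 hxy)]
      exact (hmono x hx y hy hxy).trans (le_abs_self _)
    · rw [abs_sub_comm, abs_of_nonneg (sub_nonneg.2 hyx), abs_sub_comm]
      exact (hmono y hy x hx hyx).trans (le_abs_self _)
  have hfab : f a ≤ f b := by
    linarith [hmono a (left_mem_Icc.2 hab) b (right_mem_Icc.2 hab) hab,
      mul_nonneg hk (sub_nonneg.2 hab)]
  have hrange : ∀ x ∈ Icc a b, f x ∈ Icc (f a) (f b) := fun x hx =>
    ⟨by linarith [hmono a (left_mem_Icc.2 hab) x hx hx.1, mul_nonneg hk (sub_nonneg.2 hx.1)],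
      by linarith [hmono x hx b (right_mem_Icc.2 hab) hx.2, mul_nonneg hk (sub_nonneg.2 hx.2)]⟩
  -- `x₀` is a preimage of the projection of `c` onto `f '' [a, b] = [f a, f b]`
  obtain ⟨x₀, hx₀, hfx₀⟩ := intermediate_value_Icc hab hf (projIcc (f a) (f b) hfab c).2
  refine ⟨x₀, hx₀, fun x hx => ?_⟩
  calc k * |x - x₀| ≤ |f x - f x₀| := hsep x₀ hx₀ x hx
    _ = |(projIcc (f a) (f b) hfab (f x) : ℝ) - projIcc (f a) (f b) hfab c| := by
        rw [hfx₀, projIcc_of_mem hfab (hrange x hx)]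
    _ ≤ |c - f x| := by rw [abs_sub_comm c]; exact abs_projIcc_sub_projIcc hfab

theorem mul_sub_le_sub_of_le_hasDerivAt {f f' : ℝ → ℝ} {a b k : ℝ}
    (hf : ∀ x ∈ Icc a b, HasDerivAt f (f' x) x) (hk : ∀ x ∈ Icc a b, k ≤ f' x) :
    ∀ x ∈ Icc a b, ∀ y ∈ Icc a b, x ≤ y → k * (y - x) ≤ f y - f x :=
  (convex_Icc a b).mul_sub_le_image_sub_of_le_deriv
    (fun x hx => (hf x hx).continuousAt.continuousWithinAt)
    (fun x hx => (hf x (interior_subset hx)).differentiableAt.differentiableWithinAt)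
    (fun x hx => (hf x (interior_subset hx)).deriv ▸ hk x (interior_subset hx))

theorem exists_mul_abs_sub_le_abs_sub_of_le_abs_deriv {f f' : ℝ → ℝ} {a b k : ℝ} (hab : a ≤ b)
    (hk : 0 < k) (hf : ∀ x ∈ Icc a b, HasDerivAt f (f' x) x) (hf' : ∀ x ∈ Icc a b, k ≤ |f' x|)
    (c : ℝ) : ∃ x₀ ∈ Icc a b, ∀ x ∈ Icc a b, k * |x - x₀| ≤ |c - f x| := by
  have hcont : ContinuousOn f (Icc a b) := fun x hx => (hf x hx).continuousAt.continuousWithinAt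
  rcases hasDerivWithinAt_forall_lt_or_forall_gt_of_forall_ne (convex_Icc a b)
    (fun x hx => (hf x hx).hasDerivWithinAt) (m := 0)
    (fun x hx h => by linarith [hf' x hx, abs_eq_zero.2 h]) with hneg | hpos
  · have hmono := mul_sub_le_sub_of_le_hasDerivAt (fun x hx => (hf x hx).neg)
      (fun x hx => by linarith [hf' x hx, abs_of_neg (hneg x hx)])
    obtain ⟨x₀, hx₀, h⟩ :=
      exists_mul_abs_sub_le_abs_sub_of_mul_sub_le hab hk.le hcont.neg hmono (-c)
    refine ⟨x₀, hx₀, fun x hx => ?_⟩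
    simpa only [Pi.neg_apply, neg_sub_neg, abs_sub_comm (f x)] using h x hx
  · exact exists_mul_abs_sub_le_abs_sub_of_mul_sub_le hab hk.le hcont
      (mul_sub_le_sub_of_le_hasDerivAt hf fun x hx => by
        linarith [hf' x hx, abs_of_pos (hpos x hx)]) c

theorem im_deriv_eq_zero_of_forall_im_eq_zero {m : ℂ → ℂ} {a b x : ℝ} (hab : a < b)
    (hx : x ∈ Icc a b) (hm : DifferentiableAt ℂ m x) (hreal : ∀ y ∈ Icc a b, (m y).im = 0) :
    (deriv m x).im = 0 := by
  have h := (hm.hasDerivAt.const_mul (-I)).real_of_complex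
  simp only [neg_mul, neg_re, mul_re, I_re, zero_mul, I_im, one_mul, zero_sub, neg_neg] at h
  exact (uniqueDiffOn_Icc hab x hx).eq_deriv _ h.hasDerivWithinAt
    ((hasDerivWithinAt_const x (Icc a b) 0).congr hreal (hreal x hx))

theorem IsCompact.exists_pos_norm_sub_sub_deriv_mul_le {f : ℂ → ℂ} {U T : Set ℂ} (hT : IsCompact T)
    (hU : IsOpen U) (hTU : T ⊆ U) (hf : DifferentiableOn ℂ f U) {η : ℝ} (hη : 0 < η) :
    ∃ ρ > 0, ∀ z ∈ T, ∀ w, ‖w - z‖ < ρ → ‖f w - f z - deriv f z * (w - z)‖ ≤ η * ‖w - z‖ := by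
  obtain ⟨r, hr, hrU⟩ := hT.exists_cthickening_subset_open hU hTU
  obtain ⟨δ, hδ, hunif⟩ := Metric.uniformContinuousOn_iff.1
    (hT.cthickening.uniformContinuousOn_of_continuous
      ((hf.analyticOnNhd hU).deriv.continuousOn.mono hrU)) η hη
  refine ⟨min r δ, lt_min hr hδ, fun z hz w hw => ?_⟩
  have hball : ball z (min r δ) ⊆ cthickening r T :=
    ball_subset_closedBall.trans
      ((closedBall_subset_closedBall (min_le_left _ _)).trans (closedBall_subset_cthickening hz r))
  have hderiv : ∀ v ∈ ball z (min r δ), HasDerivWithinAt (fun v => f v - deriv f z * v)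
      (deriv f v - deriv f z) (ball z (min r δ)) v := fun v hv => by
    have h := (hf.differentiableAt (hU.mem_nhds (hrU (hball hv)))).hasDerivAt.sub
      ((hasDerivAt_id' v).const_mul (deriv f z))
    rw [mul_one] at h
    exact h.hasDerivWithinAt
  have hbound : ∀ v ∈ ball z (min r δ), ‖deriv f v - deriv f z‖ ≤ η := fun v hv => by
    simpa only [dist_eq_norm] using (hunif v (hball hv) z (self_subset_cthickening T hz)
      (lt_of_lt_of_le hv (min_le_right _ _))).le
  have := (convex_ball z _).norm_image_sub_le_of_norm_hasDerivWithin_le hderiv hbound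
    (mem_ball_self (lt_min hr hδ)) (mem_ball_iff_norm.2 hw)
  rwa [show f w - f z - deriv f z * (w - z) = f w - deriv f z * w - (f z - deriv f z * z) by ring]

theorem exists_pos_mul_le_norm_sub_add_mul_I {m : ℂ → ℂ} {U : Set ℂ} {a b k : ℝ} (hab : a < b)
    (hk : 0 < k) (hU : IsOpen U) (hIU : ∀ x ∈ Icc a b, (x : ℂ) ∈ U)
    (hm : DifferentiableOn ℂ m U) (hreal : ∀ x ∈ Icc a b, (m x).im = 0)
    (hm' : ∀ x ∈ Icc a b, k ≤ ‖deriv m x‖) :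
    ∃ ε₀ > 0, ∀ c : ℝ, ∃ x₀ ∈ Icc a b, ∀ x ∈ Icc a b, ∀ t : ℝ, |t| < ε₀ →
      k * (|x - x₀| + |t|) / 4 ≤ ‖(c : ℂ) - m (x + t * I)‖ := by
  have hmx : ∀ x ∈ Icc a b, DifferentiableAt ℂ m x := fun x hx =>
    hm.differentiableAt (hU.mem_nhds (hIU x hx))
  have hm_ofReal : ∀ x ∈ Icc a b, m x = ((m x).re : ℂ) := fun x hx =>
    Complex.ext rfl (by simpa using hreal x hx)
  have hderiv_ofReal : ∀ x ∈ Icc a b, deriv m x = ((deriv m x).re : ℂ) := fun x hx =>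
    Complex.ext rfl (by simpa using im_deriv_eq_zero_of_forall_im_eq_zero hab hx (hmx x hx) hreal)
  have hk_re : ∀ x ∈ Icc a b, k ≤ |(deriv m x).re| := fun x hx => by
    have h := hm' x hx
    rwa [hderiv_ofReal x hx, norm_real, Real.norm_eq_abs] at h
  obtain ⟨ρ, hρ, htaylor⟩ :=
    (isCompact_Icc.image continuous_ofReal).exists_pos_norm_sub_sub_deriv_mul_le hU
      (by rintro _ ⟨x, hx, rfl⟩; exact hIU x hx) hm (by positivity : 0 < k / 4)
  refine ⟨ρ, hρ, fun c => ?_⟩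
  obtain ⟨x₀, hx₀, hsep⟩ := exists_mul_abs_sub_le_abs_sub_of_le_abs_deriv hab.le hk
    (fun x hx => (hmx x hx).hasDerivAt.real_of_complex) hk_re c
  refine ⟨x₀, hx₀, fun x hx t ht => ?_⟩
  have hstep : ‖(x : ℂ) + t * I - x‖ = |t| := by simp
  have herr := htaylor x ⟨x, hx, rfl⟩ (x + t * I) (by rwa [hstep])
  rw [hstep] at herr
  set z : ℂ := ((c - (m x).re : ℝ) : ℂ) + ((-(t * (deriv m x).re) : ℝ) : ℂ) * I
  have hsplit :
      (c : ℂ) - m (x + t * I) = z - (m (x + t * I) - m x - deriv m x * (x + t * I - x)) := by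
    rw [hderiv_ofReal x hx, hm_ofReal x hx]; simp only [z]; push_cast; ring
  have hz : k * (|x - x₀| + |t|) / 2 ≤ ‖z‖ := by
    have hre : |c - (m x).re| ≤ ‖z‖ := by simpa [z] using abs_re_le_norm z
    have him : |t| * |(deriv m x).re| ≤ ‖z‖ := by simpa [z, abs_mul] using abs_im_le_norm z
    nlinarith [hsep x hx, hk_re x hx, abs_nonneg t]
  rw [hsplit]
  linarith [norm_sub_norm_le z (m (x + t * I) - m x - deriv m x * (x + t * I - x)),
    mul_nonneg hk.le (abs_nonneg (x - x₀))]

theorem norm_div_sub_div_le_of_le_norm {𝕜 : Type*} [NormedField 𝕜] {p p' q q' : 𝕜} {D : ℝ}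
    (hD : 0 < D) (hq : D ≤ ‖q‖) (hq' : D ≤ ‖q'‖) :
    ‖p / q - p' / q'‖ ≤ (‖p - p'‖ * ‖q'‖ + ‖p'‖ * ‖q - q'‖) / D ^ 2 := by
  have hq0 : q ≠ 0 := norm_pos_iff.1 (hD.trans_le hq)
  have hq'0 : q' ≠ 0 := norm_pos_iff.1 (hD.trans_le hq')
  rw [div_sub_div _ _ hq0 hq'0, norm_div, norm_mul,
    show p * q' - q * p' = (p - p') * q' - p' * (q - q') by ring]
  calc ‖(p - p') * q' - p' * (q - q')‖ / (‖q‖ * ‖q'‖)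
      ≤ (‖p - p'‖ * ‖q'‖ + ‖p'‖ * ‖q - q'‖) / (‖q‖ * ‖q'‖) := by
        gcongr
        exact (norm_sub_le _ _).trans_eq (by rw [norm_mul, norm_mul])
    _ ≤ (‖p - p'‖ * ‖q'‖ + ‖p'‖ * ‖q - q'‖) / D ^ 2 := by
        rw [sq]; gcongr

theorem DifferentiableOn.exists_lipschitzOnWith_of_isCompact {f : ℂ → ℂ} {U K : Set ℂ}
    (hf : DifferentiableOn ℂ f U) (hU : IsOpen U) (hK : IsCompact K) (hKU : K ⊆ U) :
    ∃ L, LipschitzOnWith L f K := by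
  refine LocallyLipschitzOn.exists_lipschitzOnWith_of_compact hK fun z hz => ?_
  obtain ⟨L, t, ht, hLip⟩ :=
    ((hf.contDiffOn hU (n := 1)).contDiffAt (hU.mem_nhds (hKU hz))).exists_lipschitzOnWith
  exact ⟨L, t, mem_nhdsWithin_of_mem_nhds ht, hLip⟩

theorem exists_norm_div_sub_div_le {m n : ℂ → ℂ} {U K : Set ℂ} (hU : IsOpen U)
    (hm : DifferentiableOn ℂ m U) (hn : DifferentiableOn ℂ n U) (hK : IsCompact K) (hKU : K ⊆ U)
    (Λ : ℝ) :
    ∃ C ≥ 0, ∀ c : ℂ, ‖c‖ ≤ Λ → ∀ w ∈ K, ∀ w' ∈ K, ∀ D > 0, D ≤ ‖c - m w‖ → D ≤ ‖c - m w'‖ →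
      ‖n w / (c - m w) - n w' / (c - m w')‖ ≤ C * ‖w - w'‖ / D ^ 2 := by
  obtain ⟨Lm, hLm⟩ := hm.exists_lipschitzOnWith_of_isCompact hU hK hKU
  obtain ⟨Ln, hLn⟩ := hn.exists_lipschitzOnWith_of_isCompact hU hK hKU
  obtain ⟨Mm, hMm⟩ := hK.exists_bound_of_continuousOn (hm.continuousOn.mono hKU)
  obtain ⟨Mn, hMn⟩ := hK.exists_bound_of_continuousOn (hn.continuousOn.mono hKU)
  refine ⟨Ln * max (Λ + Mm) 0 + max Mn 0 * Lm, by positivity,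
    fun c hc w hw w' hw' D hD hq hq' => ?_⟩
  have hnn : ‖n w - n w'‖ ≤ Ln * ‖w - w'‖ := by
    simpa only [dist_eq_norm] using hLn.dist_le_mul w hw w' hw'
  have hmm : ‖(c - m w) - (c - m w')‖ ≤ Lm * ‖w - w'‖ := by
    simpa only [dist_eq_norm, sub_sub_sub_cancel_left, norm_sub_rev (m w')]
      using hLm.dist_le_mul w hw w' hw'
  have hq'le : ‖c - m w'‖ ≤ max (Λ + Mm) 0 :=
    le_max_of_le_left ((norm_sub_le _ _).trans (add_le_add hc (hMm w' hw')))
  have hn'le : ‖n w'‖ ≤ max Mn 0 := le_max_of_le_left (hMn w' hw')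
  refine (norm_div_sub_div_le_of_le_norm hD hq hq').trans ?_
  gcongr ?_ / _
  calc ‖n w - n w'‖ * ‖c - m w'‖ + ‖n w'‖ * ‖(c - m w) - (c - m w')‖
      ≤ Ln * ‖w - w'‖ * max (Λ + Mm) 0 + max Mn 0 * (Lm * ‖w - w'‖) := by gcongr
    _ = _ := by ring

theorem exists_norm_integrand_le_mul_poisson {m n : ℂ → ℂ} {U : Set ℂ} {a b k : ℝ} {S : Set ℝ}
    (hab : a < b) (hk : 0 < k) (hU : IsOpen U) (hIU : ∀ x ∈ Icc a b, (x : ℂ) ∈ U)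
    (hm : DifferentiableOn ℂ m U) (hn : DifferentiableOn ℂ n U)
    (hreal : ∀ x ∈ Icc a b, (m x).im = 0) (hm' : ∀ x ∈ Icc a b, k ≤ ‖deriv m x‖)
    (hS : IsCompact S) :
    ∃ ε₀ > 0, ∃ C ≥ 0, ∀ c ∈ S, ∃ x₀ : ℝ, ∀ x ∈ Icc a b, ∀ ε : ℝ, 0 < ε → ε < ε₀ →
      ‖n (x + ε * I) / (c - m (x + ε * I)) - n (x - ε * I) / (c - m (x - ε * I))‖
        ≤ C * (ε / ((x - x₀) ^ 2 + ε ^ 2)) := by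
  have hT : IsCompact (ofReal '' Icc a b) := isCompact_Icc.image continuous_ofReal
  obtain ⟨r, hr, hrU⟩ :=
    hT.exists_cthickening_subset_open hU (by rintro _ ⟨x, hx, rfl⟩; exact hIU x hx)
  obtain ⟨ε₁, hε₁, hlow⟩ := exists_pos_mul_le_norm_sub_add_mul_I hab hk hU hIU hm hreal hm'
  obtain ⟨Λ, hΛ⟩ := hS.exists_bound_of_continuousOn continuousOn_id
  obtain ⟨C, hC, hdiff⟩ := exists_norm_div_sub_div_le hU hm hn hT.cthickening hrU Λ
  refine ⟨min ε₁ r, lt_min hε₁ hr, 32 * C / k ^ 2, by positivity, fun c hc => ?_⟩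
  obtain ⟨x₀, -, hx₀⟩ := hlow c
  refine ⟨x₀, fun x hx ε hε hεlt => ?_⟩
  have hmem : ∀ t : ℝ, |t| ≤ r → (x : ℂ) + t * I ∈ cthickening r (ofReal '' Icc a b) :=
    fun t ht => mem_cthickening_of_dist_le _ (x : ℂ) r _ ⟨x, hx, rfl⟩
      (by simpa [dist_eq_norm] using ht)
  have hεr : |ε| ≤ r := (abs_of_pos hε).trans_le ((hεlt.trans_le (min_le_right _ _)).le)
  have hεε₁ : |ε| < ε₁ := (abs_of_pos hε).trans_lt (hεlt.trans_le (min_le_left _ _))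
  have hminus : (x : ℂ) - ε * I = x + ((-ε : ℝ) : ℂ) * I := by push_cast; ring
  have hD : 0 < k * (|x - x₀| + |ε|) / 4 := by positivity
  rw [hminus]
  calc _ ≤ C * ‖(x + ε * I) - (x + ((-ε : ℝ) : ℂ) * I)‖ / (k * (|x - x₀| + |ε|) / 4) ^ 2 :=
        hdiff c (by simpa using hΛ c hc) _ (hmem ε hεr) _ (hmem (-ε) (by rwa [abs_neg]))
          _ hD (hx₀ x hx ε hεε₁) (by simpa using hx₀ x hx (-ε) (by rwa [abs_neg]))
    _ = 32 * C / k ^ 2 * (ε / (|x - x₀| + ε) ^ 2) := by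
        have hgap : (x : ℂ) + ε * I - (x + ((-ε : ℝ) : ℂ) * I) = ((2 * ε : ℝ) : ℂ) * I := by
          push_cast; ring
        rw [abs_of_pos hε, hgap, norm_mul, norm_real, norm_I, mul_one,
          Real.norm_of_nonneg (by positivity)]
        field_simp
        ring
    _ ≤ 32 * C / k ^ 2 * (ε / ((x - x₀) ^ 2 + ε ^ 2)) := by
        gcongr
        nlinarith [sq_abs (x - x₀), abs_nonneg (x - x₀)]

theorem stmt13_general (a b : ℝ) (hab : a ≤ b) (U : Set ℂ) (hU : IsOpen U)
    (hIU : ∀ x ∈ Icc a b, (x : ℂ) ∈ U)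
    (m n : ℂ → ℂ) (hm : DifferentiableOn ℂ m U) (hn : DifferentiableOn ℂ n U)
    (hmreal : ∀ x ∈ Icc a b, (m (x : ℂ)).im = 0)
    (k : ℝ) (hk : 0 < k) (hkinf : ∀ x ∈ Icc a b, k ≤ ‖deriv m (x : ℂ)‖)
    (S : Set ℝ) (hS : IsCompact S) :
    ∃ ε₀ > (0 : ℝ), ∃ C : ℝ,
      ∀ lam ∈ S, ∀ ε : ℝ, 0 < ε → ε < ε₀ →
        ‖(1 / (2 * (π : ℂ) * Complex.I)) * ∫ x in a..b,
            (n ((x : ℂ) + ε * Complex.I) / ((lam : ℂ) - m ((x : ℂ) + ε * Complex.I))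
              - n ((x : ℂ) - ε * Complex.I) / ((lam : ℂ) - m ((x : ℂ) - ε * Complex.I)))‖
          ≤ C := by
  rcases hab.eq_or_lt with rfl | hab
  · exact ⟨1, one_pos, 0, fun _ _ _ _ _ => by simp⟩
  obtain ⟨ε₀, hε₀, C, hC, hbound⟩ :=
    exists_norm_integrand_le_mul_poisson hab hk hU hIU hm hn hmreal hkinf hS
  refine ⟨ε₀, hε₀, C / 2, fun lam hlam ε hε hεlt => ?_⟩
  obtain ⟨x₀, hx₀⟩ := hbound lam hlam
  have hint := norm_integral_le_mul_pi_of_norm_le hab.le hε hC fun x hx => hx₀ x hx ε hε hεlt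
  have hprefactor : ‖1 / (2 * (π : ℂ) * I)‖ = 1 / (2 * π) := by simp [abs_of_pos pi_pos]
  rw [norm_mul, hprefactor]
  calc 1 / (2 * π) * _ ≤ 1 / (2 * π) * (C * π) := by gcongr
    _ = C / 2 := by field_simp

/-- uniform bound for the approximate Stieltjes-inversion kernel
`k_I(λ,ε)`, for `λ` in a compact set and `0 < ε < ε₀`. -/
theorem stmt13 (a b : ℝ) (hab : a ≤ b) (U : Set ℂ) (hU : IsOpen U)
    (hIU : ∀ x ∈ Icc a b, (x : ℂ) ∈ U)
    (m n : ℂ → ℂ) (hm : DifferentiableOn ℂ m U) (hn : DifferentiableOn ℂ n U)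
    (hmreal : ∀ x ∈ Icc a b, (m (x : ℂ)).im = 0)
    (hnreal : ∀ x ∈ Icc a b, (n (x : ℂ)).im = 0)
    (k : ℝ) (hk : 0 < k) (hkinf : ∀ x ∈ Icc a b, k ≤ ‖deriv m (x : ℂ)‖)
    (hnne : ∀ x ∈ Icc a b, n (x : ℂ) ≠ 0)
    (S : Set ℝ) (hS : IsCompact S) :
    ∃ ε₀ > (0 : ℝ), ∃ C : ℝ,
      ∀ lam ∈ S, ∀ ε : ℝ, 0 < ε → ε < ε₀ →
        ‖(1 / (2 * (π : ℂ) * Complex.I)) * ∫ x in a..b,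
            (n ((x : ℂ) + ε * Complex.I) / ((lam : ℂ) - m ((x : ℂ) + ε * Complex.I))
              - n ((x : ℂ) - ε * Complex.I) / ((lam : ℂ) - m ((x : ℂ) - ε * Complex.I)))‖
          ≤ C :=
  stmt13_general a b hab U hU hIU m n hm hn hmreal k hk hkinf S hS
end

section
/- Let D be the operator on G = ⊕_{v∈V} ℂ^{deg v} defined by (Dξ)_{v,e} = ξ_{v_e, e}, where v_e denotes the other endpoint of the edge e, and let P = ⊕_v P_v where P_v is the orthogonal projection onto the span of the all-ones vector p_v ∈ ℂ^{deg v}. Then the map Θ : ℓ²(G) → ran P, (Θξ)_v = ξ(v) p_v, is unitary and intertwines D_P := P D P* with the weighted adjacency operator Δ: D_P Θ = Θ Δ. -/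
open Set

/-
`Θξ` is constant, equal to `ξ v`, on the `deg v` edge-sides at `v`. Summing `‖Θξ‖²` fibre by
fibre over the endpoint map therefore gives the weighted norm `∑ deg v ‖ξ v‖²`, and averaging
`Θξ` over a fibre returns `ξ v`, so `PΘ = Θ`. Conversely every `η` with `Pη = η` is constant on
fibres, hence is `Θ` of its fibre averages. Finally `P D Θ ξ` averages `ξ(v_e)` over the
edge-sides at `v`, which is `Δξ (v)` by definition.
-/

/-- The endpoint of an edge-side pair: `(e, false)` is the initial vertex `ιe`,
`(e, true)` is the terminal vertex `τe`. -/
def endv {V E : Type*} (ι τ : E → V) (p : E × Bool) : V :=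
  if p.2 then τ p.1 else ι p.1

/-- The degree of a vertex: the number of incident edge-sides. -/
noncomputable def vdeg {V E : Type*} (ι τ : E → V) (v : V) : ℕ :=
  Nat.card {p : E × Bool // endv ι τ p = v}

/-- `Θ : ℓ²(G) → 𝒢`, `(Θξ)_{v,e} = ξ(v)`. -/
def Theta {V E : Type*} (ι τ : E → V) (ξ : V → ℂ) (p : E × Bool) : ℂ :=
  ξ (endv ι τ p)

/-- `(Dξ)_{v,e} = ξ_{v_e,e}`: swap of the two endpoints of each edge. -/
def Dop {V E : Type*} (_ι _τ : E → V) (ξ : E × Bool → ℂ) (p : E × Bool) : ℂ :=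
  ξ (p.1, !p.2)

/-- `P = ⊕_v P_v`, the orthogonal projection onto the all-ones vectors. -/
noncomputable def Pop {V E : Type*} (ι τ : E → V) (ξ : E × Bool → ℂ)
    (p : E × Bool) : ℂ :=
  ((vdeg ι τ (endv ι τ p) : ℂ))⁻¹ *
    ∑ᶠ q ∈ {q : E × Bool | endv ι τ q = endv ι τ p}, ξ q

/-- The weighted adjacency operator `(Δξ)(v) = (1/deg v) Σ_{e ∈ E_v} ξ(v_e)`. -/
noncomputable def adjOp' {V E : Type*} (ι τ : E → V) (ξ : V → ℂ) (v : V) : ℂ :=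
  ((vdeg ι τ v : ℂ))⁻¹ *
    ∑ᶠ p ∈ {p : E × Bool | endv ι τ p = v}, ξ (endv ι τ (p.1, !p.2))

-- No finiteness is needed: for infinite `s` both sides are junk `0`.
theorem finsum_mem_const {α M : Type*} [AddCommMonoid M] (s : Set α) (c : M) :
    ∑ᶠ i ∈ s, c = Nat.card s • c := by
  rw [← finsum_set_coe_eq_finsum_mem (f := fun _ => c)]
  rcases finite_or_infinite s with hs | hs
  · have := Fintype.ofFinite s
    rw [finsum_eq_sum_of_fintype, Finset.sum_const, Finset.card_univ, Nat.card_eq_fintype_card]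
  · by_cases hc : c = 0
    · simp [hc]
    · rw [Nat.card_eq_zero_of_infinite, zero_smul,
        finsum_of_infinite_support (by rwa [Function.support_const hc, infinite_univ_iff])]

theorem tsum_comp_eq_tsum_card_fiber_mul {α β : Type*} {f : α → β}
    (hf : ∀ b, (f ⁻¹' {b}).Finite) {g : β → ℝ} (hg : 0 ≤ g)
    (hs : Summable fun b => (Nat.card (f ⁻¹' {b}) : ℝ) * g b) :
    ∑' a, g (f a) = ∑' b, (Nat.card (f ⁻¹' {b}) : ℝ) * g b := by
  have hfiber : ∀ b, ∑' a : f ⁻¹' {b}, g (f a) = (Nat.card (f ⁻¹' {b}) : ℝ) * g b := by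
    intro b
    rw [tsum_congr fun a : f ⁻¹' {b} => congrArg g a.2, tsum_const, nsmul_eq_mul]
  have hsum : Summable (g ∘ f) :=
    (summable_partition (s := fun b => f ⁻¹' {b}) (fun a => hg (f a))
      fun a => ⟨f a, rfl, fun _ hb => hb.symm⟩).2
      ⟨fun b => have := (hf b).to_subtype; Summable.of_finite, by simpa only [hfiber] using hs⟩
  exact (hsum.hasSum.tsum_fiberwise f).tsum_eq.symm.trans (tsum_congr hfiber)

section Graph

variable {V E : Type*} (ι τ : E → V)

theorem tsum_norm_sq_Theta (hfin : ∀ v : V, {p : E × Bool | endv ι τ p = v}.Finite)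
    (ξ : V → ℂ) (hs : Summable fun v => (vdeg ι τ v : ℝ) * ‖ξ v‖ ^ 2) :
    ∑' p : E × Bool, ‖Theta ι τ ξ p‖ ^ 2 = ∑' v : V, (vdeg ι τ v : ℝ) * ‖ξ v‖ ^ 2 :=
  tsum_comp_eq_tsum_card_fiber_mul hfin (fun _ => by positivity) hs

theorem vdeg_endv_pos (hfin : ∀ v : V, {p : E × Bool | endv ι τ p = v}.Finite) (p : E × Bool) :
    0 < vdeg ι τ (endv ι τ p) :=
  have : Finite {q : E × Bool // endv ι τ q = endv ι τ p} := (hfin (endv ι τ p)).to_subtype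
  have : Nonempty {q : E × Bool // endv ι τ q = endv ι τ p} := ⟨⟨p, rfl⟩⟩
  Nat.card_pos

theorem finsum_mem_Theta_fiber (ξ : V → ℂ) (v : V) :
    ∑ᶠ q ∈ {q : E × Bool | endv ι τ q = v}, Theta ι τ ξ q = vdeg ι τ v * ξ v := by
  rw [finsum_mem_congr (s := {q | endv ι τ q = v}) (f := Theta ι τ ξ) (g := fun _ => ξ v) rfl
      fun _ hq => congrArg ξ hq, finsum_mem_const, nsmul_eq_mul]
  rfl

theorem Pop_Theta (hfin : ∀ v : V, {p : E × Bool | endv ι τ p = v}.Finite) (ξ : V → ℂ) :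
    Pop ι τ (Theta ι τ ξ) = Theta ι τ ξ := by
  funext p
  have hdeg : (vdeg ι τ (endv ι τ p) : ℂ) ≠ 0 := Nat.cast_ne_zero.2 (vdeg_endv_pos ι τ hfin p).ne'
  rw [Pop, finsum_mem_Theta_fiber, inv_mul_cancel_left₀ hdeg]
  rfl

theorem exists_Theta_eq_of_Pop_eq {η : E × Bool → ℂ} (hη : Pop ι τ η = η) :
    ∃ ξ : V → ℂ, Theta ι τ ξ = η :=
  ⟨fun v => (vdeg ι τ v : ℂ)⁻¹ * ∑ᶠ q ∈ {q : E × Bool | endv ι τ q = v}, η q, hη⟩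

end Graph

theorem stmt17_general {V E : Type*} (ι τ : E → V)
    (hfin : ∀ v : V, {p : E × Bool | endv ι τ p = v}.Finite) :
    (∀ ξ : V → ℂ, Summable (fun v => (vdeg ι τ v : ℝ) * ‖ξ v‖ ^ 2) →
      (∑' p : E × Bool, ‖Theta ι τ ξ p‖ ^ 2)
        = ∑' v : V, (vdeg ι τ v : ℝ) * ‖ξ v‖ ^ 2) ∧
    (∀ ξ : V → ℂ, Pop ι τ (Theta ι τ ξ) = Theta ι τ ξ) ∧
    (∀ η : E × Bool → ℂ, Pop ι τ η = η → ∃ ξ : V → ℂ, Theta ι τ ξ = η) ∧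
    (∀ ξ : V → ℂ, Pop ι τ (Dop ι τ (Theta ι τ ξ)) = Theta ι τ (adjOp' ι τ ξ)) :=
  ⟨tsum_norm_sq_Theta ι τ hfin, Pop_Theta ι τ hfin, fun _ => exists_Theta_eq_of_Pop_eq ι τ,
    fun _ => rfl⟩

/-- `Θ` is a unitary of `ℓ²(G)` onto `ran P` and intertwines
`D_P = P D P*` with the weighted adjacency operator `Δ`: `D_P Θ = Θ Δ`. -/
theorem stmt17 {V E : Type*} (ι τ : E → V)
    (hfin : ∀ v : V, {p : E × Bool | endv ι τ p = v}.Finite)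
    (hdeg : ∀ v : V, 1 ≤ vdeg ι τ v) :
    (∀ ξ : V → ℂ, Summable (fun v => (vdeg ι τ v : ℝ) * ‖ξ v‖ ^ 2) →
      (∑' p : E × Bool, ‖Theta ι τ ξ p‖ ^ 2)
        = ∑' v : V, (vdeg ι τ v : ℝ) * ‖ξ v‖ ^ 2) ∧
    (∀ ξ : V → ℂ, Pop ι τ (Theta ι τ ξ) = Theta ι τ ξ) ∧
    (∀ η : E × Bool → ℂ, Pop ι τ η = η → ∃ ξ : V → ℂ, Theta ι τ ξ = η) ∧
    (∀ ξ : V → ℂ, Pop ι τ (Dop ι τ (Theta ι τ ξ)) = Theta ι τ (adjOp' ι τ ξ)) :=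
  stmt17_general ι τ hfin
end
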